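/- arXiv:math/0204224 — 3 statements merged into one kernel-verified Lean document; each statement's English description precedes it below -/
import Mathlib

section
/- Let V be a finite-dimensional complex vector space with dim V = n and let N : V → V be of hook type with parameters (n, b): N^b = 0, N^{b−1} ≠ 0, and dim(im N) = b − 1. Let F ⊆ V be a subspace with im N^{b−1} ⊆ F ⊆ ker N (so in particular N(F) = 0 ⊆ F), and let N̄ : V/F → V/F be the quotient map induced by N. Then for every integer d ≥ 1, ker N̄^d = (ker N^{d+1})/F and im N̄^d = (im N^d + F)/F. -/
open LinearMap Submodule Module

section aux
variable {V : Type*} [AddCommGroup V] [Module ℂ V] [FiniteDimensional ℂ V] (N : V →ₗ[ℂ] V)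

lemma aux_rn (p : Submodule ℂ V) :
    finrank ℂ (p.map N) + finrank ℂ (LinearMap.ker N ⊓ p : Submodule ℂ V) = finrank ℂ p := by
  have h := (N.domRestrict p).finrank_range_add_finrank_ker
  rw [range_domRestrict, ker_domRestrict] at h
  have e : comap p.subtype (LinearMap.ker N) = comap p.subtype (LinearMap.ker N ⊓ p) := by
    ext x; simp [x.2]
  rw [e, (comapSubtypeEquivOfLe (inf_le_right : LinearMap.ker N ⊓ p ≤ p)).finrank_eq] at h
  exact h

omit [FiniteDimensional ℂ V] in
lemma aux_range_antitone {k m : ℕ} (h : k ≤ m) :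
    LinearMap.range (N ^ m) ≤ LinearMap.range (N ^ k) := by
  obtain ⟨j, rfl⟩ := Nat.exists_eq_add_of_le h
  rw [pow_add]
  exact LinearMap.range_comp_le_range _ _

omit [FiniteDimensional ℂ V] in
lemma aux_map_range (k : ℕ) :
    (LinearMap.range (N ^ k)).map N = LinearMap.range (N ^ (k + 1)) := by
  rw [pow_succ']
  exact (LinearMap.range_comp (N ^ k) N).symm

variable {N} {b : ℕ}

omit [FiniteDimensional ℂ V] in
lemma aux_rangeb1_le_ker (hNb : N ^ b = 0) (hb : 1 ≤ b) :
    LinearMap.range (N ^ (b - 1)) ≤ LinearMap.ker N := by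
  rintro x ⟨y, rfl⟩
  have : (N * N ^ (b - 1)) y = 0 := by
    rw [← pow_succ']
    have : b - 1 + 1 = b := by omega
    rw [this, hNb]; rfl
  simpa [LinearMap.mem_ker] using this

lemma aux_e_ge_one (hNb : N ^ b = 0) (hNb1 : N ^ (b - 1) ≠ 0) {k : ℕ} (hk : k + 1 ≤ b) :
    1 ≤ finrank ℂ (LinearMap.ker N ⊓ LinearMap.range (N ^ k) : Submodule ℂ V) := by
  have hle : LinearMap.range (N ^ (b - 1)) ≤ LinearMap.ker N ⊓ LinearMap.range (N ^ k) :=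
    le_inf (aux_rangeb1_le_ker hNb (by omega)) (aux_range_antitone N (by omega))
  have hne : LinearMap.range (N ^ (b - 1)) ≠ ⊥ :=
    fun h => hNb1 (LinearMap.range_eq_bot.mp h)
  have h1 : 0 < finrank ℂ (LinearMap.range (N ^ (b - 1))) :=
    Nat.pos_of_ne_zero (fun h => hne (Submodule.finrank_eq_zero.mp h))
  exact lt_of_lt_of_le h1 (Submodule.finrank_mono hle)

lemma aux_rank_upper (hNb : N ^ b = 0) (hNb1 : N ^ (b - 1) ≠ 0)
    (hrank : finrank ℂ (LinearMap.range N) = b - 1) :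
    ∀ k, 1 ≤ k → k ≤ b → finrank ℂ (LinearMap.range (N ^ k)) + k ≤ b := by
  intro k hk
  induction k, hk using Nat.le_induction with
  | base =>
    intro hb
    rw [pow_one, hrank]; omega
  | succ k hk ih =>
    intro hkb
    have h1 := aux_rn N (LinearMap.range (N ^ k))
    rw [aux_map_range] at h1
    have h2 := aux_e_ge_one hNb hNb1 (k := k) (by omega)
    have h3 := ih (by omega)
    omega

lemma aux_rank_lower (hNb : N ^ b = 0) (hNb1 : N ^ (b - 1) ≠ 0) :
    ∀ j, j ≤ b → j ≤ finrank ℂ (LinearMap.range (N ^ (b - j))) := by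
  intro j
  induction j with
  | zero => intro _; omega
  | succ j ih =>
    intro hj
    have h1 := aux_rn N (LinearMap.range (N ^ (b - (j + 1))))
    rw [aux_map_range] at h1
    have h2 := aux_e_ge_one hNb hNb1 (k := b - (j + 1)) (by omega)
    have h3 := ih (by omega)
    have he : b - (j + 1) + 1 = b - j := by omega
    rw [he] at h1
    omega

lemma aux_key (hNb : N ^ b = 0) (hNb1 : N ^ (b - 1) ≠ 0)
    (hrank : finrank ℂ (LinearMap.range N) = b - 1)
    {d : ℕ} (hd : 1 ≤ d) (hdb : d ≤ b - 1) :
    LinearMap.ker N ⊓ LinearMap.range (N ^ d) = LinearMap.range (N ^ (b - 1)) := by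
  have hb2 : 2 ≤ b := by omega
  have hle : LinearMap.range (N ^ (b - 1)) ≤ LinearMap.ker N ⊓ LinearMap.range (N ^ d) :=
    le_inf (aux_rangeb1_le_ker hNb (by omega)) (aux_range_antitone N (by omega))
  have h1 := aux_rn N (LinearMap.range (N ^ d))
  rw [aux_map_range] at h1
  have hup := aux_rank_upper hNb hNb1 hrank d hd (by omega)
  have hlow := aux_rank_lower hNb hNb1 (b - d - 1) (by omega)
  have he : b - (b - d - 1) = d + 1 := by omega
  rw [he] at hlow
  have hone : 1 ≤ finrank ℂ (LinearMap.range (N ^ (b - 1))) := by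
    rw [Nat.one_le_iff_ne_zero]
    intro h
    exact hNb1 (LinearMap.range_eq_bot.mp (Submodule.finrank_eq_zero.mp h))
  exact (Submodule.eq_of_le_of_finrank_le hle (by omega)).symm

end aux

/-- For a hook-type nilpotent `N` on an `n`-dimensional complex vector space and a
subspace `F` with `im N^(b-1) ⊆ F ⊆ ker N`, the induced quotient map
`N̄ : V/F → V/F` (characterized by `N̄ ∘ π = π ∘ N`) satisfies, for every `d ≥ 1`,
`ker N̄^d = (ker N^(d+1))/F` and `im N̄^d = (im N^d + F)/F`. -/
theorem hook_quotient_ker_and_range_pow {V : Type*} [AddCommGroup V] [Module ℂ V]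
    [FiniteDimensional ℂ V] (n b : ℕ) (hn : Module.finrank ℂ V = n)
    (N : V →ₗ[ℂ] V) (hNb : N ^ b = 0) (hNb1 : N ^ (b - 1) ≠ 0)
    (hrank : Module.finrank ℂ (LinearMap.range N) = b - 1)
    (F : Submodule ℂ V) (hF1 : LinearMap.range (N ^ (b - 1)) ≤ F)
    (hF2 : F ≤ LinearMap.ker N)
    (Nbar : (V ⧸ F) →ₗ[ℂ] (V ⧸ F))
    (hNbar : ∀ v : V, Nbar (F.mkQ v) = F.mkQ (N v))
    (d : ℕ) (hd : 1 ≤ d) :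
    LinearMap.ker (Nbar ^ d) = (LinearMap.ker (N ^ (d + 1))).map F.mkQ ∧
      LinearMap.range (Nbar ^ d) = (LinearMap.range (N ^ d) ⊔ F).map F.mkQ := by
  -- iterated compatibility
  have hbar : ∀ k (v : V), (Nbar ^ k) (F.mkQ v) = F.mkQ ((N ^ k) v) := by
    intro k
    induction k with
    | zero => intro v; simp
    | succ k ih =>
      intro v
      rw [pow_succ', pow_succ', Module.End.mul_apply, Module.End.mul_apply]
      rw [← hNbar, ih v] -- careful: need Nbar ((Nbar^k)(mkQ v))
  -- key: N^{d+1} v = 0 → N^d v ∈ F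
  have key : ∀ v : V, (N ^ (d + 1)) v = 0 → (N ^ d) v ∈ F := by
    intro v hv
    by_cases hbd : b ≤ d
    · have : (N ^ d) v = 0 := by
        have : N ^ d = N ^ (d - b) * N ^ b := by rw [← pow_add]; congr 1; omega
        rw [this, Module.End.mul_apply, hNb]; simp
      rw [this]; exact F.zero_mem
    · have hdb : d ≤ b - 1 := by omega
      have hker : (N ^ d) v ∈ LinearMap.ker N := by
        rw [LinearMap.mem_ker]
        have : (N * N ^ d) v = 0 := by rw [← pow_succ']; exact hv
        simpa using this
      have hmem : (N ^ d) v ∈ LinearMap.ker N ⊓ LinearMap.range (N ^ d) :=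
        Submodule.mem_inf.mpr ⟨hker, ⟨v, rfl⟩⟩
      rw [aux_key hNb hNb1 hrank hd hdb] at hmem
      exact hF1 hmem
  constructor
  · -- kernel
    ext x
    constructor
    · intro hx
      obtain ⟨v, rfl⟩ := F.mkQ_surjective x
      rw [LinearMap.mem_ker, hbar] at hx
      have hNdv : (N ^ d) v ∈ F := by
        rwa [← Submodule.Quotient.mk_eq_zero, ← Submodule.mkQ_apply]
      refine ⟨v, ?_, rfl⟩
      have h0 : (N * N ^ d) v = 0 := by
        rw [Module.End.mul_apply]
        exact hF2 hNdv
      rw [← pow_succ'] at h0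
      exact LinearMap.mem_ker.mpr h0
    · rintro ⟨v, hv, rfl⟩
      have hv' : (N ^ (d + 1)) v = 0 := hv
      rw [LinearMap.mem_ker, hbar, Submodule.mkQ_apply, Submodule.Quotient.mk_eq_zero]
      exact key v hv'
  · -- range
    rw [Submodule.map_sup]
    have hFbot : F.map F.mkQ = ⊥ := Submodule.mkQ_map_self F
    rw [hFbot, sup_bot_eq]
    ext x
    simp only [LinearMap.mem_range, Submodule.mem_map]
    constructor
    · rintro ⟨y, rfl⟩
      obtain ⟨v, rfl⟩ := F.mkQ_surjective y
      exact ⟨(N ^ d) v, ⟨v, rfl⟩, (hbar d v).symm⟩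
    · rintro ⟨w, ⟨v, rfl⟩, rfl⟩
      exact ⟨F.mkQ v, hbar d v⟩
end

section
/- Let V be a finite-dimensional complex vector space with dim V = n and let N : V → V be of hook type with parameters (n, b): N^b = 0, N^{b−1} ≠ 0, and dim(im N) = b − 1. Let i_1 < i_2 < ⋯ < i_{b−1} be integers with j ≤ i_j ≤ n − b + j for each 1 ≤ j ≤ b − 1 (these are exactly the possible top rows n, i_{b−1}, …, i_1 of a standard Young tableau of hook shape). Then there exists a complete flag F(0) ⊂ F(1) ⊂ ⋯ ⊂ F(n) in V that is fixed by N and satisfies im N^{b−j} ⊆ F(i_j) ⊆ ker N^j for every 1 ≤ j ≤ b − 1. -/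
/-!
Pick `v` with `N ^ (b - 1) v ≠ 0`. Its cyclic span `C = ⟨v, N v, …, N ^ (b - 1) v⟩` has
dimension `b`, and `N C` has dimension `b - 1 = dim (im N)`, so `N C = im N`, `C + ker N = V`,
and `V = C ⊕ W` for some `W ⊆ ker N`. Put `C_s = ⟨N ^ (b - s) v, …, N ^ (b - 1) v⟩`, so that
`N C_s ⊆ C_(s-1)`, `C_s ⊆ ker N ^ s` and `im N ^ (b - s) = C_s`, and fix a complete flag `G` of
`W`. If `c k` is the number of rows `i_1, …, i_(b-1), i_b = n` that are at most `k`, the flag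
`F k = C_(c k) ⊕ G (k - c k)` takes a chain vector exactly at the steps `i_j`. It is fixed by `N`
because `c` grows by at most one per step and `N W = 0`, and `F (i_j) = C_j ⊕ G (i_j - j)` lies
between `im N ^ (b - j) = C_j` and `ker N ^ j`.
-/

open Module Submodule

section Cyclic

open Set

variable {R M : Type*} [Semiring R] [AddCommMonoid M] [Module R M]

def cyclicSpan (N : Module.End R M) (w : M) : Submodule R M :=
  span R (range fun t : ℕ => (N ^ t) w)

variable {N : Module.End R M}

lemma exists_pow_apply_eq_zero_iff {b : ℕ} (hNb : N ^ b = 0) (hNb1 : N ^ (b - 1) ≠ 0) :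
    ∃ v : M, ∀ t, (N ^ t) v = 0 ↔ b ≤ t := by
  obtain ⟨v, hv⟩ : ∃ v, (N ^ (b - 1)) v ≠ 0 := not_forall.mp fun h => hNb1 (LinearMap.ext h)
  refine ⟨v, fun t => ⟨fun h => ?_, fun h => End.pow_map_zero_of_le h (by simp [hNb])⟩⟩
  by_contra hlt
  exact hv (End.pow_map_zero_of_le (by omega) h)

lemma pow_apply_pow_sub_eq_zero_iff {v : M} {b s : ℕ} (hv : ∀ t, (N ^ t) v = 0 ↔ b ≤ t)
    (hs : s ≤ b) (t : ℕ) : (N ^ t) ((N ^ (b - s)) v) = 0 ↔ s ≤ t := by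
  rw [← End.mul_apply, ← pow_add, hv]
  omega

lemma ker_le_ker_pow {k : ℕ} (hk : 1 ≤ k) : LinearMap.ker N ≤ LinearMap.ker (N ^ k) :=
  fun _ hx => End.pow_map_zero_of_le hk (by simpa using hx)

lemma cyclicSpan_pow_apply_le {k m : ℕ} (h : k ≤ m) (w : M) :
    cyclicSpan N ((N ^ m) w) ≤ cyclicSpan N ((N ^ k) w) := by
  refine span_le.mpr ?_
  rintro _ ⟨t, rfl⟩
  refine subset_span ⟨t + (m - k), ?_⟩
  simp only [← End.mul_apply, ← pow_add]
  congr 2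
  omega

lemma cyclicSpan_pow_apply_le_self (m : ℕ) (w : M) :
    cyclicSpan N ((N ^ m) w) ≤ cyclicSpan N w := by
  simpa using cyclicSpan_pow_apply_le (N := N) m.zero_le w

lemma map_pow_cyclicSpan (k : ℕ) (w : M) :
    (cyclicSpan N w).map (N ^ k) = cyclicSpan N ((N ^ k) w) := by
  rw [cyclicSpan, map_span, ← range_comp]
  congr 2
  funext t
  simp only [Function.comp_apply, ← End.mul_apply, ← pow_add, add_comm]

lemma map_cyclicSpan (w : M) : (cyclicSpan N w).map N = cyclicSpan N (N w) := by
  simpa using map_pow_cyclicSpan (N := N) 1 w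

lemma cyclicSpan_le_ker_pow {k : ℕ} {w : M} (h : (N ^ k) w = 0) :
    cyclicSpan N w ≤ LinearMap.ker (N ^ k) := by
  refine span_le.mpr ?_
  rintro _ ⟨t, rfl⟩
  rw [SetLike.mem_coe, LinearMap.mem_ker, ← End.mul_apply, ← pow_add, add_comm, pow_add,
    End.mul_apply, h, map_zero]

lemma cyclicSpan_eq_span_fin {s : ℕ} {w : M} (hs : (N ^ s) w = 0) :
    cyclicSpan N w = span R (range fun t : Fin s => (N ^ (t : ℕ)) w) := by
  refine le_antisymm (span_le.mpr ?_) (span_mono ?_)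
  · rintro _ ⟨t, rfl⟩
    by_cases ht : t < s
    · exact subset_span ⟨⟨t, ht⟩, rfl⟩
    · simp [End.pow_map_zero_of_le (not_lt.mp ht) hs]
  · rintro _ ⟨t, rfl⟩
    exact ⟨t, rfl⟩

end Cyclic

section Field

open Set

variable {K V : Type*} [Field K] [AddCommGroup V] [Module K V] {N : Module.End K V}

lemma linearIndependent_pow_apply {s : ℕ} {w : V} (hw : ∀ t, (N ^ t) w = 0 ↔ s ≤ t) :
    LinearIndependent K (fun t : Fin s => (N ^ (t : ℕ)) w) := by
  induction s generalizing w with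
  | zero => exact linearIndependent_empty_type
  | succ s ih =>
    have hNw : ∀ t, (N ^ t) (N w) = 0 ↔ s ≤ t := fun t => by
      rw [← End.mul_apply, ← pow_succ, hw]
      omega
    have htail : Fin.tail (fun t : Fin (s + 1) => (N ^ (t : ℕ)) w) =
        fun t : Fin s => (N ^ (t : ℕ)) (N w) :=
      funext fun t => by simp [Fin.tail, pow_succ]
    rw [linearIndependent_finSucc, htail]
    refine ⟨ih hNw, fun hmem => ?_⟩
    -- `N ^ s` kills the span of `N w, …, N ^ s w` but not `w`
    have hle : span K (range fun t : Fin s => (N ^ (t : ℕ)) (N w)) ≤ LinearMap.ker (N ^ s) := by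
      rw [← cyclicSpan_eq_span_fin ((hNw s).mpr le_rfl)]
      exact cyclicSpan_le_ker_pow ((hNw s).mpr le_rfl)
    simpa using (hw s).mp (hle hmem)

lemma finrank_cyclicSpan {s : ℕ} {w : V} (hw : ∀ t, (N ^ t) w = 0 ↔ s ≤ t) :
    finrank K (cyclicSpan N w) = s := by
  rw [cyclicSpan_eq_span_fin ((hw s).mpr le_rfl),
    finrank_span_eq_card (linearIndependent_pow_apply hw), Fintype.card_fin]

lemma exists_le_ker_isCompl_cyclicSpan [FiniteDimensional K V] {v : V} {b : ℕ}
    (hv : ∀ t, (N ^ t) v = 0 ↔ b ≤ t) (hrank : finrank K (LinearMap.range N) = b - 1) :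
    ∃ W ≤ LinearMap.ker N, IsCompl (cyclicSpan N v) W := by
  have hmap : (cyclicSpan N v).map N = LinearMap.range N := by
    refine eq_of_le_of_finrank_eq LinearMap.map_le_range ?_
    rw [hrank, map_cyclicSpan]
    refine finrank_cyclicSpan fun t => ?_
    rw [← End.mul_apply, ← pow_succ, hv]
    omega
  have hcod : Codisjoint (LinearMap.ker N) (cyclicSpan N v) := by
    rw [codisjoint_iff, sup_comm, ← comap_map_eq, hmap]
    exact LinearMap.range_le_iff_comap.mp le_rfl
  obtain ⟨W, hW, hcompl⟩ := hcod.exists_isCompl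
  exact ⟨W, hW, hcompl.symm⟩

lemma exists_monotone_le_finrank_eq (W : Submodule K V) [FiniteDimensional K W] :
    ∃ G : ℕ → Submodule K V, Monotone G ∧ (∀ m, G m ≤ W) ∧
      ∀ m ≤ finrank K W, finrank K (G m) = m := by
  set e := W.subtype ∘ finBasis K W
  have he : LinearIndependent K e := (finBasis K W).linearIndependent.map' _ W.ker_subtype
  refine ⟨fun m => span K (e '' {t | (t : ℕ) < m}),
    fun m m' h => span_mono (image_mono fun t ht => lt_of_lt_of_le ht h),
    fun m => span_le.mpr ?_, fun m hm => ?_⟩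
  · rintro _ ⟨t, -, rfl⟩
    exact (finBasis K W t).2
  · have : span K (e '' {t | (t : ℕ) < m}) = span K (range (e ∘ Fin.castLE hm)) := by
      congr 1
      ext
      constructor
      · rintro ⟨t, ht, rfl⟩
        exact ⟨⟨t, ht⟩, rfl⟩
      · rintro ⟨t, rfl⟩
        exact ⟨_, t.isLt, rfl⟩
    show finrank K (span K (e '' {t | (t : ℕ) < m})) = m
    rw [this, finrank_span_eq_card (he.comp _ (Fin.castLE_injective hm)), Fintype.card_fin]

end Field

section Count

open Finset

def countLE (I : ℕ → ℕ) (b k : ℕ) : ℕ := #{j ∈ Icc 1 b | I j ≤ k}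

variable {I : ℕ → ℕ} {b : ℕ}

lemma countLE_mono : Monotone (countLE I b) := fun _ _ h =>
  card_le_card (monotone_filter_right _ fun _ _ hj => hj.trans h)

lemma countLE_le (k : ℕ) : countLE I b k ≤ b :=
  (card_filter_le _ _).trans (by simp)

lemma countLE_succ_le (hI : Set.InjOn I (Set.Icc 1 b)) (k : ℕ) :
    countLE I b (k + 1) ≤ countLE I b k + 1 := by
  have hsub : {j ∈ Icc 1 b | I j ≤ k + 1} ⊆
      {j ∈ Icc 1 b | I j ≤ k} ∪ {j ∈ Icc 1 b | I j = k + 1} := by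
    intro j
    simp only [mem_filter, mem_union, mem_Icc]
    omega
  have hone : #{j ∈ Icc 1 b | I j = k + 1} ≤ 1 := card_le_one.mpr fun j hj j' hj' => by
    simp only [mem_filter, mem_Icc] at hj hj'
    exact hI hj.1 hj'.1 (hj.2.trans hj'.2.symm)
  exact (card_le_card hsub).trans ((card_union_le _ _).trans (by unfold countLE; omega))

lemma countLE_le_self (hlow : ∀ j ∈ Set.Icc 1 b, j ≤ I j) (k : ℕ) : countLE I b k ≤ k := by
  have hsub : {j ∈ Icc 1 b | I j ≤ k} ⊆ Icc 1 k := fun j hj => by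
    simp only [mem_filter, mem_Icc] at hj ⊢
    exact ⟨hj.1.1, (hlow j hj.1).trans hj.2⟩
  simpa [countLE] using card_le_card hsub

lemma le_countLE_add {m k : ℕ} (hhigh : ∀ j ∈ Set.Icc 1 b, I j ≤ m + j) (hk : k ≤ m + b) :
    k ≤ countLE I b k + m := by
  have hsub : Icc 1 (k - m) ⊆ {j ∈ Icc 1 b | I j ≤ k} := fun j hj => by
    simp only [mem_filter, mem_Icc] at hj ⊢
    exact ⟨⟨hj.1, by omega⟩, (hhigh j ⟨hj.1, by omega⟩).trans (by omega)⟩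
  have := card_le_card hsub
  simp only [Nat.card_Icc] at this
  unfold countLE
  omega

lemma countLE_apply (hI : StrictMonoOn I (Set.Icc 1 b)) {j : ℕ} (hj : j ∈ Set.Icc 1 b) :
    countLE I b (I j) = j := by
  have hfilter : {j' ∈ Icc 1 b | I j' ≤ I j} = Icc 1 j := by
    ext j'
    simp only [mem_filter, mem_Icc]
    constructor
    · rintro ⟨hj', h⟩
      exact ⟨hj'.1, (hI.le_iff_le hj' hj).mp h⟩
    · rintro h
      have hj' : j' ∈ Set.Icc 1 b := ⟨h.1, h.2.trans hj.2⟩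
      exact ⟨hj', (hI.le_iff_le hj' hj).mpr h.2⟩
  simp [countLE, hfilter]

end Count

/-- The top row `i 1 < ⋯ < i (b - 1) < n` of a standard hook tableau, with `n` at index `b`. -/
def hookRows (i : ℕ → ℕ) (b n : ℕ) : ℕ → ℕ := Function.update i b n

section HookRows

variable {n b : ℕ} {i : ℕ → ℕ}

lemma hookRows_mem_Icc (hbound : ∀ j : ℕ, 1 ≤ j → j ≤ b - 1 → j ≤ i j ∧ i j ≤ n - b + j)
    (hbn : b ≤ n) :
    ∀ j ∈ Set.Icc 1 b, hookRows i b n j ∈ Set.Icc j (n - b + j) := by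
  rintro j ⟨hj1, hjb⟩
  rcases eq_or_ne j b with rfl | hne
  · simp only [hookRows, Function.update_self, Set.mem_Icc]
    omega
  · rw [hookRows, Function.update_of_ne hne]
    exact hbound j hj1 (by omega)

lemma strictMonoOn_hookRows (hbound : ∀ j : ℕ, 1 ≤ j → j ≤ b - 1 → j ≤ i j ∧ i j ≤ n - b + j)
    (hbn : b ≤ n) (hmono : ∀ j : ℕ, 1 ≤ j → j + 1 ≤ b - 1 → i j < i (j + 1)) :
    StrictMonoOn (hookRows i b n) (Set.Icc 1 b) := by
  refine strictMonoOn_of_lt_add_one Set.ordConnected_Icc fun j _ hj hj1 => ?_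
  simp only [Set.mem_Icc] at hj hj1
  rw [hookRows, Function.update_of_ne (show j ≠ b by omega)]
  rcases eq_or_ne (j + 1) b with hb | hb
  · rw [hb, Function.update_self]
    have := (hbound j hj.1 (by omega)).2
    omega
  · rw [Function.update_of_ne hb]
    exact hmono j hj.1 (by omega)

end HookRows

section Flag

variable {R M : Type*} [Semiring R] [AddCommMonoid M] [Module R M] {N : Module.End R M}
  {v : M} {b : ℕ} {G : ℕ → Submodule R M} {c : ℕ → ℕ}

def hookFlag (N : Module.End R M) (v : M) (b : ℕ) (G : ℕ → Submodule R M) (c : ℕ → ℕ)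
    (k : ℕ) : Submodule R M :=
  cyclicSpan N ((N ^ (b - c k)) v) ⊔ G (k - c k)

lemma hookFlag_le_succ (hG : Monotone G) {k : ℕ} (hc : c k ≤ c (k + 1))
    (hc1 : c (k + 1) ≤ c k + 1) : hookFlag N v b G c k ≤ hookFlag N v b G c (k + 1) :=
  sup_le_sup (cyclicSpan_pow_apply_le (by omega) v) (hG (by omega))

lemma map_hookFlag_le (hG : ∀ m, G m ≤ LinearMap.ker N) {k : ℕ} (hc : c k ≤ c (k - 1) + 1) :
    (hookFlag N v b G c k).map N ≤ hookFlag N v b G c (k - 1) := by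
  rw [hookFlag, Submodule.map_sup, LinearMap.le_ker_iff_map.mp (hG _), sup_bot_eq,
    map_cyclicSpan, ← End.mul_apply, ← pow_succ']
  exact le_sup_of_le_left (cyclicSpan_pow_apply_le (by omega) v)

lemma range_pow_le_hookFlag {W : Submodule R M} (hcod : Codisjoint (cyclicSpan N v) W)
    (hW : W ≤ LinearMap.ker N) {j k : ℕ} (hj : j < b) (hjc : j ≤ c k) :
    LinearMap.range (N ^ (b - j)) ≤ hookFlag N v b G c k := by
  rw [LinearMap.range_eq_map, ← codisjoint_iff.mp hcod, Submodule.map_sup,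
    LinearMap.le_ker_iff_map.mp (hW.trans (ker_le_ker_pow (by omega))), sup_bot_eq,
    map_pow_cyclicSpan]
  exact le_sup_of_le_left (cyclicSpan_pow_apply_le (by omega) v)

lemma hookFlag_le_ker_pow (hvb : (N ^ b) v = 0) (hG : ∀ m, G m ≤ LinearMap.ker N) {j k : ℕ}
    (hj : 1 ≤ j) (hcj : c k ≤ j) : hookFlag N v b G c k ≤ LinearMap.ker (N ^ j) := by
  refine sup_le (cyclicSpan_le_ker_pow ?_) ((hG _).trans (ker_le_ker_pow hj))
  rw [← End.mul_apply, ← pow_add]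
  exact End.pow_map_zero_of_le (by omega) hvb

end Flag

lemma finrank_hookFlag {K V : Type*} [Field K] [AddCommGroup V] [Module K V]
    [FiniteDimensional K V] {N : Module.End K V} {v : V} {b : ℕ} {G : ℕ → Submodule K V}
    {c : ℕ → ℕ} {W : Submodule K V} (hv : ∀ t, (N ^ t) v = 0 ↔ b ≤ t)
    (hdisj : Disjoint (cyclicSpan N v) W) {k : ℕ} (hGW : G (k - c k) ≤ W)
    (hGdim : finrank K (G (k - c k)) = k - c k) (hcb : c k ≤ b) (hck : c k ≤ k) :
    finrank K (hookFlag N v b G c k) = k := by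
  have hd : Disjoint (cyclicSpan N ((N ^ (b - c k)) v)) (G (k - c k)) :=
    hdisj.mono (cyclicSpan_pow_apply_le_self _ v) hGW
  have := finrank_sup_add_finrank_inf_eq (cyclicSpan N ((N ^ (b - c k)) v)) (G (k - c k))
  rw [hd.eq_bot, finrank_bot, finrank_cyclicSpan (pow_apply_pow_sub_eq_zero_iff hv hcb),
    hGdim] at this
  rw [hookFlag]
  omega

/-- For a hook-type nilpotent `N` on an `n`-dimensional complex vector space and
integers `i_1 < ⋯ < i_(b-1)` with `j ≤ i_j ≤ n - b + j` (the possible top rows of a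
standard hook tableau), there exists a complete flag fixed by `N` with
`im N^(b-j) ⊆ F(i_j) ⊆ ker N^j` for all `1 ≤ j ≤ b - 1`. -/
theorem exists_flag_in_hook_component {V : Type*} [AddCommGroup V] [Module ℂ V]
    [FiniteDimensional ℂ V] (n b : ℕ) (hn : Module.finrank ℂ V = n)
    (N : V →ₗ[ℂ] V) (hNb : N ^ b = 0) (hNb1 : N ^ (b - 1) ≠ 0)
    (hrank : Module.finrank ℂ (LinearMap.range N) = b - 1)
    (i : ℕ → ℕ)
    (hmono : ∀ j : ℕ, 1 ≤ j → j + 1 ≤ b - 1 → i j < i (j + 1))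
    (hbound : ∀ j : ℕ, 1 ≤ j → j ≤ b - 1 → j ≤ i j ∧ i j ≤ n - b + j) :
    ∃ F : ℕ → Submodule ℂ V,
      (∀ k : ℕ, k ≤ n → Module.finrank ℂ (F k) = k) ∧
      (∀ k : ℕ, k < n → F k ≤ F (k + 1)) ∧
      (∀ k : ℕ, 1 ≤ k → k ≤ n → (F k).map N ≤ F (k - 1)) ∧
      (∀ j : ℕ, 1 ≤ j → j ≤ b - 1 →
        LinearMap.range (N ^ (b - j)) ≤ F (i j) ∧ F (i j) ≤ LinearMap.ker (N ^ j)) := by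
  obtain ⟨v, hv⟩ := exists_pow_apply_eq_zero_iff hNb hNb1
  obtain ⟨W, hWker, hcompl⟩ := exists_le_ker_isCompl_cyclicSpan hv hrank
  have hdim := finrank_add_eq_of_isCompl hcompl
  rw [finrank_cyclicSpan hv, hn] at hdim
  obtain ⟨G, hGmono, hGW, hGdim⟩ := exists_monotone_le_finrank_eq W
  have hGker : ∀ m, G m ≤ LinearMap.ker N := fun m => (hGW m).trans hWker
  have hbn : b ≤ n := by omega
  have hI : StrictMonoOn (hookRows i b n) (Set.Icc 1 b) :=
    strictMonoOn_hookRows hbound hbn hmono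
  have hIbd := hookRows_mem_Icc hbound hbn
  set c := countLE (hookRows i b n) b
  have hci : ∀ j, 1 ≤ j → j ≤ b - 1 → c (i j) = j := fun j h1 h2 => by
    have := countLE_apply hI ⟨h1, (by omega : j ≤ b)⟩
    rwa [show hookRows i b n j = i j from Function.update_of_ne (by omega) _ _] at this
  refine ⟨hookFlag N v b G c, fun k hk => ?_,
    fun k _ => hookFlag_le_succ hGmono (countLE_mono k.le_succ) (countLE_succ_le hI.injOn k),
    fun k hk _ => map_hookFlag_le hGker ?_, fun j hj1 hj2 =>
    ⟨range_pow_le_hookFlag hcompl.codisjoint hWker (by omega) (hci j hj1 hj2).ge,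
      hookFlag_le_ker_pow ((hv b).mpr le_rfl) hGker hj1 (hci j hj1 hj2).le⟩⟩
  · have hck : c k ≤ k := countLE_le_self (fun j hj => (hIbd j hj).1) k
    have hkc : k ≤ c k + (n - b) := le_countLE_add (fun j hj => (hIbd j hj).2) (by omega)
    exact finrank_hookFlag hv hcompl.disjoint (hGW _) (hGdim _ (by omega)) (countLE_le k) hck
  · simpa [Nat.sub_add_cancel hk] using countLE_succ_le hI.injOn (k - 1)
end

section
/- Let n ≥ b ≥ 1 be integers and let 0 = i_0 < i_1 < ⋯ < i_{b−1} < i_b = n be integers with j ≤ i_j ≤ n − b + j for all 1 ≤ j ≤ b − 1. Then in the field ℚ(t) of rational functions the following identity of balanced quantum numbers holds: (∏_{j=1}^{b−1} [i_j − i_{j−1}]! · C(n − i_{j−1} − b + j − 1, i_j − i_{j−1} − 1)) · [n − i_{b−1}]! = [n − b]! · ∏_{j=1}^{b} [i_j − i_{j−1}]. -/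
open Finset

/-- The balanced quantum integer `[m] = t^(-(m-1)) (1 + t² + ⋯ + t^(2(m-1)))`
in the field `ℚ(t)` of rational functions. -/
noncomputable def qint (m : ℕ) : RatFunc ℚ :=
  (RatFunc.X : RatFunc ℚ) ^ (1 - (m : ℤ)) *
    ∑ j ∈ Finset.range m, (RatFunc.X : RatFunc ℚ) ^ (2 * j)

/-- The balanced quantum factorial `[m]! = [1][2]⋯[m]`. -/
noncomputable def qfac (m : ℕ) : RatFunc ℚ :=
  ∏ j ∈ Finset.range m, qint (j + 1)

/-- The balanced quantum binomial coefficient `[M]! / ([k]! [M-k]!)`. -/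
noncomputable def qbinom (M k : ℕ) : RatFunc ℚ :=
  qfac M / (qfac k * qfac (M - k))

lemma qint_ne_zero {m : ℕ} (hm : 1 ≤ m) : qint m ≠ 0 := by
  unfold qint
  refine mul_ne_zero (zpow_ne_zero _ RatFunc.X_ne_zero) ?_
  rw [show (∑ j ∈ Finset.range m, (RatFunc.X : RatFunc ℚ) ^ (2 * j)) =
      algebraMap (Polynomial ℚ) (RatFunc ℚ)
        (∑ j ∈ Finset.range m, Polynomial.X ^ (2 * j)) by
    simp [map_sum, map_pow, RatFunc.algebraMap_X]]
  apply RatFunc.algebraMap_ne_zero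
  intro h
  have h2 := congrArg (Polynomial.eval (1 : ℚ)) h
  simp [Polynomial.eval_finset_sum] at h2
  exact absurd h2 (by positivity)

lemma qfac_ne_zero (m : ℕ) : qfac m ≠ 0 := by
  unfold qfac
  exact Finset.prod_ne_zero_iff.2 fun j _ => qint_ne_zero (Nat.succ_le_succ (Nat.zero_le j))

lemma qfac_succ (m : ℕ) : qfac (m + 1) = qfac m * qint (m + 1) :=
  Finset.prod_range_succ _ _

lemma qfac_eq_mul {d : ℕ} (hd : 1 ≤ d) : qfac d = qfac (d - 1) * qint d := by
  obtain ⟨e, rfl⟩ : ∃ e, d = e + 1 := ⟨d - 1, by omega⟩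
  simpa using qfac_succ e

lemma telescope {K : Type*} [Field K] (f : ℕ → K) (hf : ∀ j, f j ≠ 0) (k : ℕ) :
    ∏ j ∈ Finset.range k, (f j / f (j + 1)) = f 0 / f k := by
  induction k with
  | zero => simp [div_self (hf 0)]
  | succ k ih =>
      rw [Finset.prod_range_succ, ih, div_mul_div_comm, mul_comm (f 0) (f k),
        mul_div_mul_left _ _ (hf k)]

/-- The intersection homology Poincaré polynomial of the hook-type Springer fiber
component labeled by the standard tableau with top row `n, i_(b-1), …, i_1`:
`(∏_(j=1)^(b-1) [i_j - i_(j-1)]! C(n - i_(j-1) - b + j - 1, i_j - i_(j-1) - 1)) [n - i_(b-1)]!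
  = [n-b]! ∏_(j=1)^b [i_j - i_(j-1)]`. -/
theorem hook_component_poincare_identity (n b : ℕ) (hb : 1 ≤ b) (hbn : b ≤ n)
    (i : ℕ → ℕ) (hi0 : i 0 = 0) (hib : i b = n)
    (hmono : ∀ j : ℕ, j < b → i j < i (j + 1))
    (hbound : ∀ j : ℕ, 1 ≤ j → j ≤ b - 1 → j ≤ i j ∧ i j ≤ n - b + j) :
    (∏ j ∈ Finset.range (b - 1),
        qfac (i (j + 1) - i j) * qbinom (n + j - i j - b) (i (j + 1) - i j - 1)) *
      qfac (n - i (b - 1)) =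
    qfac (n - b) * ∏ j ∈ Finset.range b, qint (i (j + 1) - i j) := by
  obtain ⟨c, rfl⟩ : ∃ c, b = c + 1 := ⟨b - 1, by omega⟩
  simp only [Nat.add_sub_cancel]
  -- rewrite each factor of the product
  have hterm : ∀ j ∈ Finset.range c,
      qfac (i (j + 1) - i j) * qbinom (n + j - i j - (c + 1)) (i (j + 1) - i j - 1) =
      qint (i (j + 1) - i j) *
        (qfac (n + j - i j - (c + 1)) / qfac (n + (j + 1) - i (j + 1) - (c + 1))) := by
    intro j hj
    rw [Finset.mem_range] at hj
    have h1 : i j + (c + 1) ≤ n + j := by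
      rcases Nat.eq_zero_or_pos j with h | h
      · subst h; simp [hi0]; omega
      · have := (hbound j h (by omega)).2; omega
    have h2 : i (j + 1) + (c + 1) ≤ n + j + 1 := by
      have := (hbound (j + 1) (by omega) (by omega)).2; omega
    have h3 : i j < i (j + 1) := hmono j (by omega)
    have hd : 1 ≤ i (j + 1) - i j := by omega
    have hsub : n + j - i j - (c + 1) - (i (j + 1) - i j - 1) =
        n + (j + 1) - i (j + 1) - (c + 1) := by omega
    rw [qbinom, hsub, qfac_eq_mul hd]
    have hA := qfac_ne_zero (i (j + 1) - i j - 1)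
    have hB := qfac_ne_zero (n + (j + 1) - i (j + 1) - (c + 1))
    field_simp
  rw [Finset.prod_congr rfl hterm, Finset.prod_mul_distrib,
    telescope (fun j => qfac (n + j - i j - (c + 1))) (fun j => qfac_ne_zero _) c]
  have hc : i c < n := by have := hmono c (by omega); omega
  have e0 : n + 0 - i 0 - (c + 1) = n - (c + 1) := by omega
  have e1 : n + c - i c - (c + 1) = n - i c - 1 := by omega
  simp only [e0, e1]
  rw [Finset.prod_range_succ, show i (c + 1) - i c = n - i c by rw [hib],
    qfac_eq_mul (show 1 ≤ n - i c by omega)]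
  have hB := qfac_ne_zero (n - i c - 1)
  field_simp
end
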